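/- arXiv:1510.06500 — 2 statements merged into one kernel-verified Lean document; each statement's English description precedes it below -/
import Mathlib

section
/- If N̂(q) > 0 at a singular point q on the singular curve {v = 0}, then the function κ̂₂ = (Â - B̂)/(2v(ÊĜ - F̂²)) extends to a smooth (C^∞) function in a neighborhood of q, where Â = ÊN̂ - 2vF̂M̂ + vĜL̂ and B̂ = √(Â² - 4v(ÊĜ-F̂²)(L̂N̂-vM̂²)). -/
open scoped RealInnerProductSpace

private def Afun (E F G L M N : ℝ × ℝ → ℝ) (p : ℝ × ℝ) : ℝ :=
  E p * N p - 2 * p.2 * F p * M p + p.2 * G p * L p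

private def Sfun (E F G L M N : ℝ × ℝ → ℝ) (p : ℝ × ℝ) : ℝ :=
  Afun E F G L M N p ^ 2
    - 4 * p.2 * (E p * G p - F p ^ 2) * (L p * N p - p.2 * M p ^ 2)

/-- if N̂(q) > 0 at a point q = (u₀,0) of the singular curve of a
cuspidal edge in adapted coordinates, then κ̂₂ = (Â - B̂)/(2v(ÊĜ - F̂²)) extends
to a C^∞ function near q. -/
theorem principal_curvature_extends
    (f ν ψ : ℝ × ℝ → EuclideanSpace ℝ (Fin 3))
    (E F G L M N : ℝ × ℝ → ℝ)
    (U : Set (ℝ × ℝ)) (hU : IsOpen U) (q : ℝ × ℝ) (hq : q ∈ U) (hq2 : q.2 = 0)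
    (hf : ContDiff ℝ (⊤ : ℕ∞) f) (hν : ContDiff ℝ (⊤ : ℕ∞) ν) (hψ : ContDiff ℝ (⊤ : ℕ∞) ψ)
    (hfv : ∀ p, fderiv ℝ f p (0, 1) = p.2 • ψ p)
    (hψ0 : ∀ p ∈ U, ψ p ≠ 0)
    (hνunit : ∀ p, ‖ν p‖ = 1)
    (hν1 : ∀ p, ⟪ν p, fderiv ℝ f p (1, 0)⟫ = 0)
    (hν2 : ∀ p, ⟪ν p, ψ p⟫ = 0)
    (hE : ∀ p, E p = ⟪fderiv ℝ f p (1, 0), fderiv ℝ f p (1, 0)⟫)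
    (hF : ∀ p, F p = ⟪fderiv ℝ f p (1, 0), ψ p⟫)
    (hG : ∀ p, G p = ⟪ψ p, ψ p⟫)
    (hL : ∀ p, L p = -⟪fderiv ℝ f p (1, 0), fderiv ℝ ν p (1, 0)⟫)
    (hM : ∀ p, M p = -⟪ψ p, fderiv ℝ ν p (1, 0)⟫)
    (hN : ∀ p, N p = -⟪ψ p, fderiv ℝ ν p (0, 1)⟫)
    (hEG : ∀ p ∈ U, E p * G p - F p ^ 2 > 0)
    (hEpos : ∀ p ∈ U, 0 < E p)
    (hNq : 0 < N q) :
    ∃ V ∈ nhds q, ∃ κ : ℝ × ℝ → ℝ, ContDiffOn ℝ (⊤ : ℕ∞) κ V ∧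
      ∀ p ∈ V, p.2 ≠ 0 →
        κ p = ((E p * N p - 2 * p.2 * F p * M p + p.2 * G p * L p)
            - Real.sqrt ((E p * N p - 2 * p.2 * F p * M p + p.2 * G p * L p) ^ 2
              - 4 * p.2 * (E p * G p - F p ^ 2) * (L p * N p - p.2 * M p ^ 2)))
          / (2 * p.2 * (E p * G p - F p ^ 2)) := by
  -- smoothness of the derivative maps
  have hfd : ContDiff ℝ (⊤ : ℕ∞) (fun p => fderiv ℝ f p (1, 0)) :=
    (hf.fderiv_right (by simp)).clm_apply contDiff_const
  have hνd1 : ContDiff ℝ (⊤ : ℕ∞) (fun p => fderiv ℝ ν p (1, 0)) :=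
    (hν.fderiv_right (by simp)).clm_apply contDiff_const
  have hνd2 : ContDiff ℝ (⊤ : ℕ∞) (fun p => fderiv ℝ ν p (0, 1)) :=
    (hν.fderiv_right (by simp)).clm_apply contDiff_const
  have hE' : ContDiff ℝ (⊤ : ℕ∞) E := by
    rw [funext hE]; exact ContDiff.inner ℝ hfd hfd
  have hF' : ContDiff ℝ (⊤ : ℕ∞) F := by
    rw [funext hF]; exact ContDiff.inner ℝ hfd hψ
  have hG' : ContDiff ℝ (⊤ : ℕ∞) G := by
    rw [funext hG]; exact ContDiff.inner ℝ hψ hψ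
  have hL' : ContDiff ℝ (⊤ : ℕ∞) L := by
    rw [funext hL]; exact (ContDiff.inner ℝ hfd hνd1).neg
  have hM' : ContDiff ℝ (⊤ : ℕ∞) M := by
    rw [funext hM]; exact (ContDiff.inner ℝ hψ hνd1).neg
  have hN' : ContDiff ℝ (⊤ : ℕ∞) N := by
    rw [funext hN]; exact (ContDiff.inner ℝ hψ hνd2).neg
  have hsnd : ContDiff ℝ (⊤ : ℕ∞) (fun p : ℝ × ℝ => p.2) := contDiff_snd
  have hA : ContDiff ℝ (⊤ : ℕ∞) (Afun E F G L M N) := by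
    unfold Afun
    exact ((hE'.mul hN').sub (((contDiff_const.mul hsnd).mul hF').mul hM')).add
      ((hsnd.mul hG').mul hL')
  have hS : ContDiff ℝ (⊤ : ℕ∞) (Sfun E F G L M N) := by
    unfold Sfun
    exact (hA.pow 2).sub
      (((contDiff_const.mul hsnd).mul ((hE'.mul hG').sub (hF'.pow 2))).mul
        ((hL'.mul hN').sub (hsnd.mul (hM'.pow 2))))
  set A := Afun E F G L M N with hAdef
  set S := Sfun E F G L M N with hSdef
  -- the open neighbourhood
  refine ⟨U ∩ A ⁻¹' Set.Ioi 0 ∩ S ⁻¹' Set.Ioi 0, ?_, ?_⟩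
  · refine (IsOpen.mem_nhds ?_ ?_)
    · exact ((hU.inter (isOpen_Ioi.preimage hA.continuous)).inter
        (isOpen_Ioi.preimage hS.continuous))
    · have hEq := hEpos q hq
      have hAq : A q = E q * N q := by
        simp [hAdef, Afun, hq2]
      have hAqpos : 0 < A q := by rw [hAq]; positivity
      have hSq : 0 < S q := by
        have : S q = A q ^ 2 := by simp [hSdef, Sfun, hAdef, hq2]
        rw [this]; positivity
      exact ⟨⟨hq, hAqpos⟩, hSq⟩
  · refine ⟨fun p => 2 * (L p * N p - p.2 * M p ^ 2) / (A p + Real.sqrt (S p)), ?_, ?_⟩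
    · intro p hp
      obtain ⟨⟨hpU, hpA⟩, hpS⟩ := hp
      have hpA : (0:ℝ) < A p := hpA
      have hpS : (0:ℝ) < S p := hpS
      have hden : A p + Real.sqrt (S p) ≠ 0 := by
        have := Real.sqrt_nonneg (S p); positivity
      have hsqrt : ContDiffAt ℝ (⊤ : ℕ∞) (fun p => Real.sqrt (S p)) p :=
        (Real.contDiffAt_sqrt hpS.ne').comp p hS.contDiffAt
      exact (ContDiffAt.div
        (contDiff_const.mul ((hL'.mul hN').sub (hsnd.mul (hM'.pow 2)))).contDiffAt
        (hA.contDiffAt.add hsqrt) hden).contDiffWithinAt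
    · intro p hp hv
      obtain ⟨⟨hpU, hpA⟩, hpS⟩ := hp
      have hpA : (0:ℝ) < A p := hpA
      have hpS : (0:ℝ) < S p := hpS
      have hD : 0 < E p * G p - F p ^ 2 := hEG p hpU
      have hsq : Real.sqrt (S p) ^ 2 = S p := Real.sq_sqrt hpS.le
      have hden1 : A p + Real.sqrt (S p) ≠ 0 := by
        have := Real.sqrt_nonneg (S p); positivity
      have hden2 : 2 * p.2 * (E p * G p - F p ^ 2) ≠ 0 := by
        simp only [mul_ne_zero_iff]
        exact ⟨⟨two_ne_zero, hv⟩, hD.ne'⟩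
      have hAeq : A p = E p * N p - 2 * p.2 * F p * M p + p.2 * G p * L p := by
        simp [hAdef, Afun]
      rw [div_eq_div_iff hden1 hden2, ← hAeq]
      have hSeq : S p = A p ^ 2
          - 4 * p.2 * (E p * G p - F p ^ 2) * (L p * N p - p.2 * M p ^ 2) := by
        simp [hSdef, Sfun, hAdef]
      rw [← hSeq]
      linear_combination hsq + hSeq
end

section
/- (Weingarten-type formula for cuspidal edges.) For a frontal f in adapted coordinates with f_v = vψ, unit normal ν orthogonal to f_u and ψ, and ÊĜ - F̂² ≠ 0, the derivatives of ν satisfy ν_u = ((F̂M̂ - ĜL̂)/(ÊĜ-F̂²)) f_u + ((F̂L̂ - ÊM̂)/(ÊĜ-F̂²)) ψ and ν_v = ((F̂N̂ - vĜM̂)/(ÊĜ-F̂²)) f_u + ((vF̂M̂ - ÊN̂)/(ÊĜ-F̂²)) ψ, where Ê = ⟨f_u,f_u⟩, F̂ = ⟨f_u,ψ⟩, Ĝ = ⟨ψ,ψ⟩, L̂ = -⟨f_u,ν_u⟩, M̂ = -⟨ψ,ν_u⟩, N̂ = -⟨ψ,ν_v⟩, and -⟨f_u,ν_v⟩ = vM̂.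 -/
open scoped RealInnerProductSpace

lemma aux_zero_of_orth (fu ψ ν x : EuclideanSpace ℝ (Fin 3))
    (hind : LinearIndependent ℝ ![fu, ψ])
    (hνunit : ‖ν‖ = 1) (hνfu : ⟪ν, fu⟫ = 0) (hνψ : ⟪ν, ψ⟫ = 0)
    (h1 : ⟪ν, x⟫ = 0) (h2 : ⟪fu, x⟫ = 0) (h3 : ⟪ψ, x⟫ = 0) : x = 0 := by
  have hli : LinearIndependent ℝ ![ν, fu, ψ] := by
    rw [show ![ν, fu, ψ] = Fin.cons ν ![fu, ψ] by
      ext i; fin_cases i <;> rfl]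
    rw [linearIndependent_fin_cons]
    refine ⟨hind, ?_⟩
    intro hmem
    have : Submodule.span ℝ (Set.range ![fu, ψ]) = Submodule.span ℝ {fu, ψ} := by
      congr 1
      simp [Matrix.range_cons, Matrix.range_empty]
      exact Set.pair_comm ψ fu
    rw [this, Submodule.mem_span_pair] at hmem
    obtain ⟨a, b, hab⟩ := hmem
    have h0 : ⟪ν, a • fu + b • ψ⟫ = 0 := by
      rw [inner_add_right, inner_smul_right, inner_smul_right, hνfu, hνψ]; ring
    rw [hab] at h0
    have : ⟪ν, ν⟫ = 0 := h0
    have hν1 : ⟪ν, ν⟫ = (1 : ℝ) := by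
      rw [real_inner_self_eq_norm_sq, hνunit]; norm_num
    rw [hν1] at this; norm_num at this
  have hcard : Fintype.card (Fin 3) = Module.finrank ℝ (EuclideanSpace ℝ (Fin 3)) := by
    simp
  let b := basisOfLinearIndependentOfCardEqFinrank hli hcard
  have hb : ∀ i, b i = ![ν, fu, ψ] i := fun i => by
    simp [b, coe_basisOfLinearIndependentOfCardEqFinrank]
  have : ∀ i, ⟪b i, x⟫ = ⟪b i, (0 : EuclideanSpace ℝ (Fin 3))⟫ := by
    intro i
    rw [hb i]
    fin_cases i <;> simp [h1, h2, h3]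
  exact InnerProductSpace.ext_inner_left_basis b this

/-- Weingarten-type formula for cuspidal edges: the derivatives
νᵤ, νᵥ of the unit normal are expressed in the frame {fᵤ, ψ} with the stated
coefficients. -/
theorem weingarten_cuspidal_edge
    (fu ψ ν νu νv : EuclideanSpace ℝ (Fin 3)) (v E F G L M N : ℝ)
    (hind : LinearIndependent ℝ ![fu, ψ])
    (hνunit : ‖ν‖ = 1) (hνfu : ⟪ν, fu⟫ = 0) (hνψ : ⟪ν, ψ⟫ = 0)
    (hννu : ⟪ν, νu⟫ = 0) (hννv : ⟪ν, νv⟫ = 0)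
    (hE : E = ⟪fu, fu⟫) (hF : F = ⟪fu, ψ⟫) (hG : G = ⟪ψ, ψ⟫)
    (hL : L = -⟪fu, νu⟫) (hM : M = -⟪ψ, νu⟫) (hN : N = -⟪ψ, νv⟫)
    (hcompat : -⟪fu, νv⟫ = v * M)
    (hEG : E * G - F ^ 2 ≠ 0) :
    νu = ((F * M - G * L) / (E * G - F ^ 2)) • fu
        + ((F * L - E * M) / (E * G - F ^ 2)) • ψ ∧
    νv = ((F * N - v * G * M) / (E * G - F ^ 2)) • fu
        + ((v * F * M - E * N) / (E * G - F ^ 2)) • ψ := by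
  have hψfu : ⟪ψ, fu⟫ = F := by rw [hF, real_inner_comm]
  constructor
  · set a := (F * M - G * L) / (E * G - F ^ 2) with ha
    set c := (F * L - E * M) / (E * G - F ^ 2) with hc
    have key : νu - (a • fu + c • ψ) = 0 := by
      apply aux_zero_of_orth fu ψ ν _ hind hνunit hνfu hνψ
      · rw [inner_sub_right, inner_add_right, inner_smul_right, inner_smul_right,
          hννu, hνfu, hνψ]; ring
      · rw [inner_sub_right, inner_add_right, inner_smul_right, inner_smul_right,
          ← hE, ← hF]
        have h1 : ⟪fu, νu⟫ = -L := by rw [hL]; ring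
        rw [h1, ha, hc]
        field_simp
        ring_nf
        rw [show -F ^ 2 + G * E = E * G - F ^ 2 by ring]
        field_simp
        ring
      · rw [inner_sub_right, inner_add_right, inner_smul_right, inner_smul_right,
          hψfu, ← hG]
        have h1 : ⟪ψ, νu⟫ = -M := by rw [hM]; ring
        rw [h1, ha, hc]
        field_simp
        ring_nf
        rw [show -F ^ 2 + G * E = E * G - F ^ 2 by ring]
        field_simp
        ring
    linear_combination (norm := module) key
  · set a := (F * N - v * G * M) / (E * G - F ^ 2) with ha
    set c := (v * F * M - E * N) / (E * G - F ^ 2) with hc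
    have key : νv - (a • fu + c • ψ) = 0 := by
      apply aux_zero_of_orth fu ψ ν _ hind hνunit hνfu hνψ
      · rw [inner_sub_right, inner_add_right, inner_smul_right, inner_smul_right,
          hννv, hνfu, hνψ]; ring
      · rw [inner_sub_right, inner_add_right, inner_smul_right, inner_smul_right,
          ← hE, ← hF]
        have h1 : ⟪fu, νv⟫ = -(v * M) := by rw [← hcompat]; ring
        rw [h1, ha, hc]
        field_simp
        ring_nf
        rw [show -F ^ 2 + G * E = E * G - F ^ 2 by ring]
        field_simp
        ring
      · rw [inner_sub_right, inner_add_right, inner_smul_right, inner_smul_right,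
          hψfu, ← hG]
        have h1 : ⟪ψ, νv⟫ = -N := by rw [hN]; ring
        rw [h1, ha, hc]
        field_simp
        ring_nf
        rw [show -F ^ 2 + G * E = E * G - F ^ 2 by ring]
        field_simp
        ring
    linear_combination (norm := module) key
end
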